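/- The map sending an affine permutation π ∈ S̃_n to its code c(π) = (c_1, ..., c_n), where c_i = #{j ∈ ℤ : i < j and π(i) > π(j)}, is a bijection from S̃_n onto ℕⁿ \ ℙⁿ (the set of n-tuples of nonnegative integers with at least one zero entry), and c_1 + c_2 + ... + c_n = ℓ(π). -/

import Mathlib

open scoped TensorProduct

/-- Membership in the affine symmetric group `S̃_n`, viewed inside `Equiv.Perm ℤ`. -/
def IsAffine (n : ℕ) (π : Equiv.Perm ℤ) : Prop :=
  (∀ i : ℤ, π (i + n) = π i + n) ∧
  (∑ i ∈ Finset.Icc (1 : ℤ) (n : ℤ), π i) = ∑ i ∈ Finset.Icc (1 : ℤ) (n : ℤ), i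

/-- The underlying function of the affine reflection `t_{ij}`. -/
def affTFun (n : ℕ) (i j k : ℤ) : ℤ :=
  if (k - i) % (n : ℤ) = 0 then k - i + j
  else if (k - j) % (n : ℤ) = 0 then k - j + i
  else k

theorem affTFun_involutive {n : ℕ} {i j : ℤ} (h : ¬ (j - i) % (n : ℤ) = 0) :
    Function.Involutive (affTFun n i j) := by
  have key : ∀ a : ℤ, a % (n : ℤ) = 0 ↔ (n : ℤ) ∣ a :=
    fun a => (@Int.dvd_iff_emod_eq_zero (n : ℤ) a).symm
  rw [key] at h
  intro k
  by_cases h1 : (n : ℤ) ∣ (k - i)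
  · have h2 : ¬ (n : ℤ) ∣ (k - i + j - i) := by
      intro hd
      apply h
      have h5 : j - i = (k - i + j - i) - (k - i) := by ring
      rw [h5]
      exact dvd_sub hd h1
    have h3 : (n : ℤ) ∣ (k - i + j - j) := by
      have h5 : k - i + j - j = k - i := by ring
      rw [h5]; exact h1
    have e1 : affTFun n i j k = k - i + j := by simp [affTFun, key, h1]
    have e2 : affTFun n i j (k - i + j) = k := by
      simp only [affTFun, key]
      rw [if_neg h2, if_pos h3]
      ring
    rw [e1, e2]
  · by_cases h2 : (n : ℤ) ∣ (k - j)
    · have h3 : (n : ℤ) ∣ (k - j + i - i) := by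
        have h5 : k - j + i - i = k - j := by ring
        rw [h5]; exact h2
      have e1 : affTFun n i j k = k - j + i := by simp [affTFun, key, h1, h2]
      have e2 : affTFun n i j (k - j + i) = k := by
        simp only [affTFun, key]
        rw [if_pos h3]
        ring
      rw [e1, e2]
    · have e1 : affTFun n i j k = k := by simp [affTFun, key, h1, h2]
      rw [e1, e1]

/-- The affine reflection `t_{ij}` (interpreted as the identity when `i ≡ j (mod n)`). -/
noncomputable def affT (n : ℕ) (i j : ℤ) : Equiv.Perm ℤ :=
  if h : (j - i) % (n : ℤ) = 0 then 1
  else Function.Involutive.toPerm _ (affTFun_involutive h)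

/-- The simple reflection `s_i = t_{i,i+1}` of `S̃_n`. -/
noncomputable def affS (n : ℕ) (i : ℤ) : Equiv.Perm ℤ := affT n i (i + 1)

/-- Coxeter length: minimal length of a word in the simple reflections `s_1, …, s_n`. -/
noncomputable def wordLength (n : ℕ) (π : Equiv.Perm ℤ) : ℕ :=
  sInf {l : ℕ | ∃ w : List ℤ,
    (∀ x ∈ w, 1 ≤ x ∧ x ≤ (n : ℤ)) ∧ (w.map (affS n)).prod = π ∧ w.length = l}

/-- The set of inversions of `π`, up to the diagonal translation relation. -/
def InvPair (π : Equiv.Perm ℤ) : Type :=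
  {p : ℤ × ℤ // p.1 < p.2 ∧ π p.2 < π p.1}

/-- The number of equivalence classes of inversions of `π` under
`(a,b) ~ (a + mn, b + mn)`. -/
noncomputable def invLength (n : ℕ) (π : Equiv.Perm ℤ) : ℕ :=
  Nat.card (Quot fun p q : InvPair π =>
    ∃ m : ℤ, q.1.1 = p.1.1 + m * n ∧ q.1.2 = p.1.2 + m * n)

/-- Entry `c_i` of the code of an affine permutation. -/
noncomputable def codeEntry (π : Equiv.Perm ℤ) (i : ℤ) : ℕ :=
  Nat.card {j : ℤ // i < j ∧ π j < π i}

/-- Entry `ĉ_i` of the involution code of an affine involution. -/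
noncomputable def icodeEntry (z : Equiv.Perm ℤ) (i : ℤ) : ℕ :=
  Nat.card {j : ℤ // i < j ∧ z j < z i ∧ z j ≤ i}

/-- `ℓ'(z)`: `n` minus the number of orbits of `z` acting on `ℤ/nℤ`. -/
noncomputable def lprime (n : ℕ) (z : Equiv.Perm ℤ) : ℕ :=
  n - Nat.card (Quot fun a b : ZMod n => ((z (a.val : ℤ) : ℤ) : ZMod n) = b)

/-- The characterizing properties of the Demazure (0-Hecke) product on `S̃_n`:
closure, associativity, `s_i ∘ s_i = s_i`, and agreement with the group product
on length-additive factorizations. -/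
def IsDemazure (n : ℕ) (D : Equiv.Perm ℤ → Equiv.Perm ℤ → Equiv.Perm ℤ) : Prop :=
  (∀ a b, IsAffine n a → IsAffine n b → IsAffine n (D a b)) ∧
  (∀ a b c, IsAffine n a → IsAffine n b → IsAffine n c →
    D (D a b) c = D a (D b c)) ∧
  (∀ i : ℤ, D (affS n i) (affS n i) = affS n i) ∧
  (∀ a b, IsAffine n a → IsAffine n b →
    wordLength n (a * b) = wordLength n a + wordLength n b → D a b = a * b)

/-- The set of Hecke atoms `{π : π⁻¹ ∘ π = z}`. -/
def AHecke (n : ℕ) (D : Equiv.Perm ℤ → Equiv.Perm ℤ → Equiv.Perm ℤ)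
    (z : Equiv.Perm ℤ) : Set (Equiv.Perm ℤ) :=
  {π | IsAffine n π ∧ D π⁻¹ π = z}

/-- The set of atoms: minimal-length Hecke atoms. -/
def DemAtoms (n : ℕ) (D : Equiv.Perm ℤ → Equiv.Perm ℤ → Equiv.Perm ℤ)
    (z : Equiv.Perm ℤ) : Set (Equiv.Perm ℤ) :=
  {π | π ∈ AHecke n D z ∧ ∀ σ ∈ AHecke n D z, wordLength n π ≤ wordLength n σ}

/-- The Bruhat covering relation on `S̃_n`. -/
def BruhatCov (n : ℕ) (a b : Equiv.Perm ℤ) : Prop :=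
  (∃ i j : ℤ, i < j ∧ (j - i) % (n : ℤ) ≠ 0 ∧ b = a * affT n i j) ∧
  wordLength n b = wordLength n a + 1

/-- The Bruhat order on `S̃_n`. -/
def BruhatLE (n : ℕ) : Equiv.Perm ℤ → Equiv.Perm ℤ → Prop :=
  Relation.ReflTransGen (BruhatCov n)

/-- The covering relation of the Bruhat order restricted to involutions in `S̃_n`. -/
def BruhatCovI (n : ℕ) (y z : Equiv.Perm ℤ) : Prop :=
  IsAffine n y ∧ IsAffine n z ∧ y⁻¹ = y ∧ z⁻¹ = z ∧
  BruhatLE n y z ∧ y ≠ z ∧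
  ∀ w : Equiv.Perm ℤ, IsAffine n w → w⁻¹ = w →
    BruhatLE n y w → BruhatLE n w z → w = y ∨ w = z

/-- Strict dominance order on partitions (written as weakly decreasing functions). -/
def DomLT (p q : ℕ → ℕ) : Prop :=
  p ≠ q ∧ ∀ k : ℕ, ∑ i ∈ Finset.range k, p i ≤ ∑ i ∈ Finset.range k, q i

/-- The shape `λ(π)`: the transpose of the partition sorting the code of `π⁻¹`,
recorded as the weakly decreasing function `k ↦ λ(π)_{k+1}`. -/
noncomputable def affShape (n : ℕ) (π : Equiv.Perm ℤ) : ℕ → ℕ :=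
  fun k => Multiset.countP (fun x => k < x)
    ((Finset.Icc (1 : ℤ) (n : ℤ)).val.map (codeEntry π⁻¹))

/-- The shape `μ(z)`: the transpose of the partition sorting the involution code of `z`,
recorded as the weakly decreasing function `k ↦ μ(z)_{k+1}`. -/
noncomputable def invShape (n : ℕ) (z : Equiv.Perm ℤ) : ℕ → ℕ :=
  fun k => Multiset.countP (fun x => k < x)
    ((Finset.Icc (1 : ℤ) (n : ℤ)).val.map (icodeEntry z))

/-- The weakly decreasing rearrangement of a multiset of naturals, padded by zeros. -/
noncomputable def rearr (s : Multiset ℕ) : ℕ → ℕ :=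
  fun k => ((s.sort (· ≤ ·)).reverse).getD k 0

/-- Remove the entries of a list of integers that repeat an earlier residue mod `n`. -/
def dedupMod (n : ℕ) : List ℤ → List ℤ
  | [] => []
  | x :: xs => x :: dedupMod n (xs.filter fun y => (y - x) % (n : ℤ) ≠ 0)
termination_by l => l.length
decreasing_by
  simp only [List.length_cons]
  first
    | exact Nat.lt_succ_of_le (List.length_filter_le _ _)
    | (simp only [List.length_unattach]
       exact Nat.lt_succ_of_le ((List.length_filter_le _ _).trans_eq List.length_attach))

/-- The window `[[z(a₁), a₁, z(a₂), a₂, …]]` of `α_min(z)⁻¹`, where `a₁ < a₂ < ⋯`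
are the elements `a ∈ [n]` with `a ≤ z(a)`. -/
noncomputable def aminWindow (n : ℕ) (z : Equiv.Perm ℤ) : List ℤ :=
  dedupMod n
    ((((Finset.Icc (1 : ℤ) (n : ℤ)).sort (· ≤ ·)).filter fun a => a ≤ z a).flatMap
      fun a => [z a, a])

/-- Cyclically decreasing elements of `S̃_n`. -/
def IsCycDec (n : ℕ) (π : Equiv.Perm ℤ) : Prop :=
  ∃ w : List ℤ,
    (∀ x ∈ w, 1 ≤ x ∧ x ≤ (n : ℤ)) ∧ (w.map (affS n)).prod = π ∧
    w.length = wordLength n π ∧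
    w.Pairwise fun a b => (a + 1 - b) % (n : ℤ) ≠ 0

/-- The coefficient of the monomial `∏ₖ xₖ₊₁^(α k)` in Lam's affine Stanley symmetric
function `F_π`: the number of length-additive factorizations of `π` into cyclically
decreasing factors of lengths prescribed by `α`. -/
noncomputable def stanleyCoeff (n : ℕ) (π : Equiv.Perm ℤ) (α : ℕ →₀ ℕ) : ℕ :=
  Nat.card {f : ℕ → Equiv.Perm ℤ //
    (∀ k, IsCycDec n (f k)) ∧ (∀ k, wordLength n (f k) = α k) ∧
    (∑ k ∈ α.support, α k) = wordLength n π ∧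
    ∃ N : ℕ, (∀ k, N ≤ k → f k = 1) ∧ ((List.range N).map f).prod = π}

/-- The set `Φ⁻_r(y)` of Bruhat covers of `y` of the form `τⁿ_{i r}(y)` with `i < r`
and `i ∉ {r, y(r)} + nℤ`. -/
def PhiMinus (n : ℕ) (τ : ℤ → ℤ → Equiv.Perm ℤ → Equiv.Perm ℤ)
    (y : Equiv.Perm ℤ) (r : ℤ) : Set (Equiv.Perm ℤ) :=
  {z | BruhatCovI n y z ∧ ∃ i : ℤ, i < r ∧ (i - r) % (n : ℤ) ≠ 0 ∧
    (i - y r) % (n : ℤ) ≠ 0 ∧ z = τ i r y}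

/-- The set `Φ⁺_r(y)` of Bruhat covers of `y` of the form `τⁿ_{r j}(y)` with `r < j`
and `j ∉ {r, y(r)} + nℤ`. -/
def PhiPlus (n : ℕ) (τ : ℤ → ℤ → Equiv.Perm ℤ → Equiv.Perm ℤ)
    (y : Equiv.Perm ℤ) (r : ℤ) : Set (Equiv.Perm ℤ) :=
  {z | BruhatCovI n y z ∧ ∃ j : ℤ, r < j ∧ (j - r) % (n : ℤ) ≠ 0 ∧
    (j - y r) % (n : ℤ) ≠ 0 ∧ z = τ r j y}

/-- The affine symmetric group as a subtype of `Equiv.Perm ℤ`. -/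
abbrev AffPerm (n : ℕ) := {π : Equiv.Perm ℤ // IsAffine n π}

/-- The coproduct `Δ(π) = Σ_{π ≐ π'π''} π' ⊗ π''` on `ℚ S̃_n`. -/
noncomputable def affComul (n : ℕ) :
    (AffPerm n →₀ ℚ) →ₗ[ℚ] TensorProduct ℚ (AffPerm n →₀ ℚ) (AffPerm n →₀ ℚ) :=
  Finsupp.lift _ ℚ _ fun π : AffPerm n =>
    ∑ᶠ p ∈ {p : AffPerm n × AffPerm n |
        p.1.val * p.2.val = π.val ∧
        wordLength n π.val = wordLength n p.1.val + wordLength n p.2.val},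
      (Finsupp.single p.1 (1 : ℚ)) ⊗ₜ[ℚ] (Finsupp.single p.2 (1 : ℚ))

/-!
The code of an affine permutation `π` is `n`-periodic, and right multiplication by the simple
reflection `s_i` at a descent `π (i + 1) < π i` acts on it by `lowerCode`: the entries in the
classes of `i` and `i + 1` are exchanged and the larger one drops by one. An affine permutation
without descents is the identity, and the minimum of `π` on `[1, n]` sits at a zero entry of
the code. So the code sum goes down by exactly one when a descent is removed and by at most one
under any `s_i`, which identifies it with the Coxeter length. Injectivity and surjectivity follow
by induction on the code sum: strip a descent from `π`, or, for a target code `c`, pick `i` with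
`c i > 0 = c (i + 1)`, realise `lowerCode n i c` and multiply back by `s_i`.
-/

open Finset Function

def windowRep (n : ℕ) (i : ℤ) : ℤ := (i - 1) % n + 1

section Window

variable {n : ℕ}

theorem windowRep_mem (hn : 0 < n) (i : ℤ) : windowRep n i ∈ Icc 1 (n : ℤ) := by
  have hn' : (0 : ℤ) < n := by exact_mod_cast hn
  have := Int.emod_nonneg (i - 1) hn'.ne'
  have := Int.emod_lt_of_pos (i - 1) hn'
  rw [windowRep, mem_Icc]
  omega

theorem windowRep_modEq (n : ℕ) (i : ℤ) : windowRep n i ≡ i [ZMOD n] := by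
  simpa [windowRep] using (Int.mod_modEq (i - 1) n).add_right 1

theorem windowRep_eq_of_modEq {i j : ℤ} (h : i ≡ j [ZMOD n]) : windowRep n i = windowRep n j := by
  rw [windowRep, windowRep, (h.sub_right 1).eq]

theorem windowRep_of_mem {k : ℤ} (hk : k ∈ Icc 1 (n : ℤ)) : windowRep n k = k := by
  rw [mem_Icc] at hk
  rw [windowRep, Int.emod_eq_of_lt (by omega) (by omega), sub_add_cancel]

theorem eq_windowRep_of_modEq {k i : ℤ} (hk : k ∈ Icc 1 (n : ℤ)) (h : k ≡ i [ZMOD n]) :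
    k = windowRep n i := by
  rw [← windowRep_eq_of_modEq h, windowRep_of_mem hk]

theorem filter_modEq_window (hn : 0 < n) (i : ℤ) :
    (Icc 1 (n : ℤ)).filter (· ≡ i [ZMOD n]) = {windowRep n i} := by
  ext k
  rw [mem_filter, mem_singleton]
  constructor
  · exact fun ⟨hk, h⟩ => eq_windowRep_of_modEq hk h
  · rintro rfl
    exact ⟨windowRep_mem hn i, windowRep_modEq n i⟩

end Window

theorem Function.Periodic.apply_eq_of_modEq {α : Type*} {f : ℤ → α} {c a b : ℤ}
    (hf : Periodic f c) (h : a ≡ b [ZMOD c]) : f a = f b := by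
  obtain ⟨t, rfl⟩ := Int.modEq_iff_add_fac.mp h
  rw [mul_comm]
  exact (hf.int_mul t a).symm

theorem Function.Periodic.eq_of_eqOn_window {α : Type*} {n : ℕ} (hn : 0 < n) {f g : ℤ → α}
    (hf : Periodic f n) (hg : Periodic g n) (h : ∀ i : ℤ, 1 ≤ i → i ≤ n → f i = g i) : f = g := by
  funext i
  have hi := mem_Icc.mp (windowRep_mem hn i)
  rw [hf.apply_eq_of_modEq (windowRep_modEq n i).symm,
    hg.apply_eq_of_modEq (windowRep_modEq n i).symm, h _ hi.1 hi.2]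

theorem exists_periodic_eqOn_window {n : ℕ} (v : ℤ → ℕ) :
    ∃ c : ℤ → ℕ, Periodic c n ∧ ∀ k : ℤ, 1 ≤ k → k ≤ n → c k = v k :=
  ⟨fun k => v (windowRep n k), fun k => by
    simp only [windowRep_eq_of_modEq (Int.add_modulus_modEq_iff.mpr Int.ModEq.rfl)],
    fun k hk1 hk2 => by simp only [windowRep_of_mem (mem_Icc.mpr ⟨hk1, hk2⟩)]⟩

theorem Monotone.eq_of_periodic {α : Type*} [PartialOrder α] {f : ℤ → α} (hf : Monotone f)
    {c : ℤ} (hc : 0 < c) (hp : Periodic f c) (x y : ℤ) : f x = f y := by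
  wlog hxy : x ≤ y generalizing x y
  · exact (this y x (le_of_not_ge hxy)).symm
  refine le_antisymm (hf hxy) ?_
  calc f y ≤ f (x + (y - x) * c) := hf (by nlinarith)
    _ = f x := hp.int_mul (y - x) x

theorem exists_ne_zero_and_succ_eq_zero {c : ℤ → ℕ} {j k : ℤ} (hj : c j ≠ 0) (hjk : j ≤ k)
    (hk : c k = 0) : ∃ i, c i ≠ 0 ∧ c (i + 1) = 0 := by
  induction k, hjk using Int.leInduction with
  | base => exact absurd hk hj
  | succ k _ ih => exact (em (c k = 0)).elim ih fun h => ⟨k, h, hk⟩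

theorem Function.Periodic.exists_ne_zero_and_succ_eq_zero {n : ℕ} (hn : 0 < n) {c : ℤ → ℕ}
    (hc : Periodic c n) (hc0 : c ≠ 0) (hz : ∃ i, c i = 0) : ∃ i, c i ≠ 0 ∧ c (i + 1) = 0 := by
  obtain ⟨j, hj⟩ := Function.ne_iff.mp hc0
  obtain ⟨k, hk⟩ := hz
  exact _root_.exists_ne_zero_and_succ_eq_zero hj
    (show j ≤ k + |j - k| * n by nlinarith [le_abs_self (j - k), abs_nonneg (j - k)])
    ((hc.int_mul _ k).trans hk)

theorem setOf_lt_and_eq_of_not {i : ℤ} {P : ℤ → Prop} (h : ¬ P (i + 1)) :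
    {j | i < j ∧ P j} = {j | i + 1 < j ∧ P j} := by
  ext j
  constructor
  · rintro ⟨hj, hP⟩
    obtain rfl | hj' := (Int.add_one_le_iff.mpr hj).eq_or_lt
    · exact absurd hP h
    · exact ⟨hj', hP⟩
  · rintro ⟨hj, hP⟩
    exact ⟨by omega, hP⟩

theorem setOf_lt_and_eq_insert {i : ℤ} {P : ℤ → Prop} (h : P (i + 1)) :
    {j | i < j ∧ P j} = insert (i + 1) {j | i + 1 < j ∧ P j} := by
  ext j
  simp only [Set.mem_insert_iff, Set.mem_ofPred_eq]
  constructor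
  · rintro ⟨hj, hP⟩
    obtain rfl | hj' := (Int.add_one_le_iff.mpr hj).eq_or_lt
    · exact Or.inl rfl
    · exact Or.inr ⟨hj', hP⟩
  · rintro (rfl | ⟨hj, hP⟩)
    · exact ⟨by omega, h⟩
    · exact ⟨by omega, hP⟩

theorem ncard_setOf_and_comp_of_involutive {α : Type*} {g : α → α} (hg : Involutive g)
    {Q P : α → Prop} (hQ : ∀ a, Q a → Q (g a)) :
    {a | Q a ∧ P (g a)}.ncard = {a | Q a ∧ P a}.ncard := by
  rw [← Set.ncard_image_of_injective _ hg.injective]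
  congr 1
  ext a
  constructor
  · rintro ⟨b, ⟨hQb, hPb⟩, rfl⟩
    exact ⟨hQ b hQb, hPb⟩
  · rintro ⟨hQa, hPa⟩
    exact ⟨g a, ⟨hQ a hQa, by rwa [hg a]⟩, hg a⟩

section Equivariant

variable {n : ℕ} {f : ℤ → ℤ}

theorem periodic_sub_of_apply_add (hf : ∀ i, f (i + n) = f i + n) :
    Periodic (fun x => f x - x) n := fun x => by
  simp only [hf, add_sub_add_right_eq_sub]

theorem modEq_apply_of_apply_add (hf : ∀ i, f (i + n) = f i + n) {a b : ℤ}
    (h : a ≡ b [ZMOD n]) : f a ≡ f b [ZMOD n] := by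
  have : f a - a = f b - b := (periodic_sub_of_apply_add hf).apply_eq_of_modEq h
  rw [show f a = (f a - a) + a by ring, show f b = (f a - a) + b by linarith]
  exact h.add_left _

end Equivariant

theorem sum_window_comp_of_apply_add {n : ℕ} (hn : 0 < n) {M : Type*} [AddCommMonoid M]
    {ρ : Equiv.Perm ℤ} (hρ : ∀ i, ρ (i + n) = ρ i + n) {D : ℤ → M} (hD : Periodic D n) :
    ∑ k ∈ Icc 1 (n : ℤ), D (ρ k) = ∑ k ∈ Icc 1 (n : ℤ), D k := by
  have hρ' : ∀ i, ρ.symm (i + n) = ρ.symm i + n := fun i =>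
    ρ.injective (by rw [hρ, Equiv.apply_symm_apply, Equiv.apply_symm_apply])
  refine sum_nbij' (fun k => windowRep n (ρ k)) (fun k => windowRep n (ρ.symm k))
    (fun k _ => windowRep_mem hn _) (fun k _ => windowRep_mem hn _) (fun k hk => ?_)
    (fun k hk => ?_) (fun k _ => hD.apply_eq_of_modEq (windowRep_modEq n _).symm)
  · rw [windowRep_eq_of_modEq (modEq_apply_of_apply_add hρ' (windowRep_modEq n _)),
      Equiv.symm_apply_apply, windowRep_of_mem hk]
  · rw [windowRep_eq_of_modEq (modEq_apply_of_apply_add hρ (windowRep_modEq n _)),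
      Equiv.apply_symm_apply, windowRep_of_mem hk]

theorem codeEntry_eq_ncard (π : Equiv.Perm ℤ) (i : ℤ) :
    codeEntry π i = {j | i < j ∧ π j < π i}.ncard :=
  Nat.card_coe_set_eq _

theorem codeEntry_one (i : ℤ) : codeEntry 1 i = 0 :=
  @Nat.card_of_isEmpty _ ⟨fun ⟨j, hij, hji⟩ => by simp at hji; omega⟩

section SimpleReflection

variable {n : ℕ}

theorem not_add_one_modEq (hn : 1 < n) (i : ℤ) : ¬ i + 1 ≡ i [ZMOD n] := by
  intro h
  have h1 : (n : ℤ) ∣ 1 := by simpa using h.dvd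
  have := Int.eq_one_of_dvd_one (by positivity) h1
  omega

theorem affS_apply (hn : 1 < n) (i k : ℤ) :
    affS n i k = k + (if k ≡ i [ZMOD n] then 1 else 0) - (if k ≡ i + 1 [ZMOD n] then 1 else 0) := by
  have hsub : ∀ a b : ℤ, (a - b) % (n : ℤ) = 0 ↔ a ≡ b [ZMOD n] := fun a b =>
    Int.emod_eq_emod_iff_emod_sub_eq_zero.symm
  rw [affS, affT, dif_neg (by rw [hsub]; exact not_add_one_modEq hn i)]
  show affTFun n i (i + 1) k = _
  simp only [affTFun, hsub]
  by_cases h1 : k ≡ i [ZMOD n]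
  · have h2 : ¬ k ≡ i + 1 [ZMOD n] := fun h2 => not_add_one_modEq hn i (h2.symm.trans h1)
    simp only [h1, h2, if_true, if_false]
    ring
  · by_cases h2 : k ≡ i + 1 [ZMOD n] <;> simp only [h1, h2, if_true, if_false] <;> ring

theorem affS_one (i : ℤ) : affS 1 i = 1 := dif_pos (by simp)

theorem affS_apply_self (hn : 1 < n) (i : ℤ) : affS n i i = i + 1 := by
  rw [affS_apply hn, if_pos Int.ModEq.rfl, if_neg fun h => not_add_one_modEq hn i h.symm]
  ring

theorem affS_apply_add_one (hn : 1 < n) (i : ℤ) : affS n i (i + 1) = i := by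
  rw [affS_apply hn, if_neg (not_add_one_modEq hn i), if_pos Int.ModEq.rfl]
  ring

theorem affS_apply_of_not_modEq (hn : 1 < n) {i k : ℤ} (h1 : ¬ k ≡ i [ZMOD n])
    (h2 : ¬ k ≡ i + 1 [ZMOD n]) : affS n i k = k := by
  simp [affS_apply hn, h1, h2]

theorem affS_mul_self (n : ℕ) (i : ℤ) : affS n i * affS n i = 1 := by
  unfold affS affT
  split_ifs with h
  · simp
  · ext k
    exact affTFun_involutive h k

theorem involutive_affS (n : ℕ) (i : ℤ) : Involutive (affS n i) := fun k => by
  rw [← Equiv.Perm.mul_apply, affS_mul_self, Equiv.Perm.one_apply]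

theorem lt_affS_apply (hn : 1 < n) {i k j : ℤ} (hk : ¬ k ≡ i [ZMOD n]) (hj : k < j) :
    k < affS n i j := by
  rw [affS_apply hn]
  split_ifs with h1 h2 h2
  · omega
  · omega
  · have : j - 1 ≠ k := by
      rintro rfl
      exact hk (by simpa using h2.sub_right 1)
    omega
  · omega

theorem isAffine_one (n : ℕ) : IsAffine n 1 := ⟨fun _ => rfl, rfl⟩

theorem IsAffine.mul (hn : 0 < n) {π ρ : Equiv.Perm ℤ} (hπ : IsAffine n π)
    (hρ : IsAffine n ρ) : IsAffine n (π * ρ) := by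
  refine ⟨fun i => by simp only [Equiv.Perm.mul_apply, hρ.1, hπ.1], ?_⟩
  have key := sum_window_comp_of_apply_add hn hρ.1 (periodic_sub_of_apply_add hπ.1)
  simp only [sum_sub_distrib, hπ.2, hρ.2, sub_self] at key
  simp only [Equiv.Perm.mul_apply]
  linarith

theorem isAffine_affS (hn : 0 < n) (i : ℤ) : IsAffine n (affS n i) := by
  obtain rfl | hn1 : n = 1 ∨ 1 < n := by omega
  · rw [affS_one]
    exact isAffine_one 1
  refine ⟨fun k => ?_, ?_⟩
  · simp only [affS_apply hn1, Int.add_modulus_modEq_iff]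
    ring
  · simp only [affS_apply hn1, sum_sub_distrib, sum_add_distrib, sum_boole,
      filter_modEq_window hn]
    simp

theorem isAffine_prod_affS (hn : 0 < n) (w : List ℤ) : IsAffine n (w.map (affS n)).prod := by
  induction w with
  | nil => exact isAffine_one n
  | cons x w ih => exact (isAffine_affS hn x).mul hn ih

theorem ncard_setOf_lt_and_affS (hn : 1 < n) (π : Equiv.Perm ℤ) {i k : ℤ}
    (hk : ¬ k ≡ i [ZMOD n]) (x : ℤ) :
    {j | k < j ∧ π (affS n i j) < x}.ncard = {j | k < j ∧ π j < x}.ncard :=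
  ncard_setOf_and_comp_of_involutive (involutive_affS n i) (P := fun j => π j < x)
    fun _ hj => lt_affS_apply hn hk hj

theorem codeEntry_mul_affS_of_not_modEq (hn : 1 < n) (π : Equiv.Perm ℤ) {i k : ℤ}
    (h1 : ¬ k ≡ i [ZMOD n]) (h2 : ¬ k ≡ i + 1 [ZMOD n]) :
    codeEntry (π * affS n i) k = codeEntry π k := by
  simp only [codeEntry_eq_ncard, Equiv.Perm.mul_apply, affS_apply_of_not_modEq hn h1 h2]
  exact ncard_setOf_lt_and_affS hn π h1 _

theorem codeEntry_mul_affS_self (hn : 1 < n) {π : Equiv.Perm ℤ} {i : ℤ}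
    (hd : π (i + 1) < π i) : codeEntry (π * affS n i) i = codeEntry π (i + 1) := by
  simp only [codeEntry_eq_ncard, Equiv.Perm.mul_apply, affS_apply_self hn]
  rw [setOf_lt_and_eq_of_not (P := fun j => π (affS n i j) < π (i + 1))
    (by simpa only [affS_apply_add_one hn] using hd.not_gt)]
  exact ncard_setOf_lt_and_affS hn π (not_add_one_modEq hn i) _

end SimpleReflection

namespace IsAffine

variable {n : ℕ} {π : Equiv.Perm ℤ}

theorem periodic_codeEntry (hA : IsAffine n π) : Periodic (codeEntry π) n := fun i =>
  (Nat.card_congr (Equiv.subtypeEquiv (Equiv.addRight (n : ℤ)) fun j => by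
    simp [hA.1])).symm

theorem exists_le_apply_sub (hn : 0 < n) (hA : IsAffine n π) : ∃ M, ∀ j, M ≤ π j - j := by
  obtain ⟨r, -, hr⟩ := (Icc 1 (n : ℤ)).exists_min_image (fun x => π x - x)
    ⟨1, by simp; omega⟩
  refine ⟨π r - r, fun j => ?_⟩
  have h : π j - j = π (windowRep n j) - windowRep n j :=
    (periodic_sub_of_apply_add hA.1).apply_eq_of_modEq (windowRep_modEq n j).symm
  rw [h]
  exact hr _ (windowRep_mem hn j)

theorem finite_setOf_lt_and (hn : 0 < n) (hA : IsAffine n π) (i x : ℤ) :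
    {j | i < j ∧ π j < x}.Finite := by
  obtain ⟨M, hM⟩ := hA.exists_le_apply_sub hn
  refine (Set.finite_Ioo i (x - M)).subset fun j ⟨hij, hjx⟩ => ⟨hij, ?_⟩
  linarith [hM j]

theorem codeEntry_lt_iff (hn : 0 < n) (hA : IsAffine n π) (i : ℤ) :
    codeEntry π (i + 1) < codeEntry π i ↔ π (i + 1) < π i := by
  rw [codeEntry_eq_ncard, codeEntry_eq_ncard]
  constructor
  · intro hlt
    by_contra! hle
    have hsub : {j | i < j ∧ π j < π i} ⊆ {j | i + 1 < j ∧ π j < π (i + 1)} := by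
      rw [setOf_lt_and_eq_of_not (P := fun j => π j < π i) hle.not_gt]
      exact fun j ⟨hij, hj⟩ => ⟨hij, hj.trans_le hle⟩
    exact (Set.ncard_le_ncard hsub (hA.finite_setOf_lt_and hn _ _)).not_gt hlt
  · intro hd
    rw [setOf_lt_and_eq_insert (P := fun j => π j < π i) hd, Set.ncard_insert_of_notMem (by simp)
      (hA.finite_setOf_lt_and hn _ _)]
    exact Nat.lt_succ_of_le (Set.ncard_le_ncard (fun j ⟨hij, hj⟩ => ⟨hij, hj.trans hd⟩)
      (hA.finite_setOf_lt_and hn _ _))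

theorem one_lt (hA : IsAffine n π) (hn : 0 < n) {i : ℤ} (hd : π (i + 1) < π i) : 1 < n := by
  by_contra h
  obtain rfl : n = 1 := by omega
  have := hA.1 i
  simp only [Nat.cast_one] at this
  omega

theorem codeEntry_mul_affS_add_one (hn : 0 < n) (hA : IsAffine n π) {i : ℤ}
    (hd : π (i + 1) < π i) : codeEntry (π * affS n i) (i + 1) + 1 = codeEntry π i := by
  have hn1 := hA.one_lt hn hd
  simp only [codeEntry_eq_ncard, Equiv.Perm.mul_apply, affS_apply_add_one hn1]
  rw [ncard_setOf_lt_and_affS hn1 π (not_add_one_modEq hn1 i),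
    setOf_lt_and_eq_insert (P := fun j => π j < π i) hd,
    Set.ncard_insert_of_notMem (by simp) (hA.finite_setOf_lt_and hn _ _)]

theorem eq_one_of_forall_lt (hn : 0 < n) (hA : IsAffine n π) (h : ∀ i, π i < π (i + 1)) :
    π = 1 := by
  have hmono : Monotone fun x => π x - x := monotone_int_of_le_succ fun i => by
    have := h i
    omega
  obtain ⟨c, hc⟩ : ∃ c, ∀ i, π i = i + c := ⟨π 0 - 0, fun i => by
    have := hmono.eq_of_periodic (by exact_mod_cast hn) (periodic_sub_of_apply_add hA.1) i 0
    omega⟩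
  have hsum := hA.2
  simp only [hc, sum_add_distrib, sum_const, Int.card_Icc, add_sub_cancel_right,
    Int.toNat_natCast, nsmul_eq_mul, add_eq_left, mul_eq_zero, Nat.cast_eq_zero,
    hn.ne', false_or] at hsum
  ext i
  simp [hc, hsum]

theorem exists_descent (hn : 0 < n) (hA : IsAffine n π) (hne : π ≠ 1) :
    ∃ i ∈ Icc 1 (n : ℤ), π (i + 1) < π i := by
  by_contra! h
  refine hne (hA.eq_one_of_forall_lt hn fun i => ?_)
  have hD := periodic_sub_of_apply_add hA.1
  have hr := (windowRep_modEq n i).symm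
  have e0 : π i - i = π (windowRep n i) - windowRep n i := hD.apply_eq_of_modEq hr
  have e1 : π (i + 1) - (i + 1) = π (windowRep n i + 1) - (windowRep n i + 1) :=
    hD.apply_eq_of_modEq (hr.add_right 1)
  have hle := h _ (windowRep_mem hn i)
  have hne' : π i ≠ π (i + 1) := fun e => by simpa using π.injective e
  omega

theorem exists_codeEntry_eq_zero (hn : 0 < n) (hA : IsAffine n π) :
    ∃ i : ℤ, 1 ≤ i ∧ i ≤ n ∧ codeEntry π i = 0 := by
  obtain ⟨r, hr, hmin⟩ := (Icc 1 (n : ℤ)).exists_min_image π ⟨1, by simp; omega⟩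
  obtain ⟨hr1, hrn⟩ := mem_Icc.mp hr
  refine ⟨r, hr1, hrn, @Nat.card_of_isEmpty _ ⟨fun ⟨j, hrj, hjr⟩ => ?_⟩⟩
  have hw := windowRep_mem hn j
  have e : π j - j = π (windowRep n j) - windowRep n j :=
    (periodic_sub_of_apply_add hA.1).apply_eq_of_modEq (windowRep_modEq n j).symm
  have hmin' := hmin _ hw
  rw [mem_Icc] at hw
  rcases le_or_gt (windowRep n j) j with hwj | hjw
  · omega
  · have : (n : ℤ) ≤ windowRep n j - j := Int.le_of_dvd (by omega) (windowRep_modEq n j).symm.dvd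
    omega

end IsAffine

/-- The code of `π * affS n i` in terms of the code `c` of `π`, when `i` is a descent of `π`. -/
def lowerCode (n : ℕ) (i : ℤ) (c : ℤ → ℕ) : ℤ → ℕ := fun k =>
  if k ≡ i [ZMOD n] then c (i + 1) else if k ≡ i + 1 [ZMOD n] then c i - 1 else c k

section LowerCode

variable {n : ℕ} {i : ℤ} {c : ℤ → ℕ}

theorem Function.Periodic.lowerCode (hc : Periodic c n) : Periodic (lowerCode n i c) n :=
  fun k => by simp only [_root_.lowerCode, Int.add_modulus_modEq_iff, hc k]

theorem eq_of_lowerCode_eq (hn : 1 < n) {c' : ℤ → ℕ} (hc : Periodic c n) (hc' : Periodic c' n)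
    (hi : 0 < c i) (hi' : 0 < c' i) (h : lowerCode n i c = lowerCode n i c') : c = c' := by
  have h0 := congrFun h i
  have h1 := congrFun h (i + 1)
  simp only [lowerCode, Int.ModEq.refl, if_true, not_add_one_modEq hn i, if_false] at h0 h1
  funext k
  by_cases hk1 : k ≡ i [ZMOD n]
  · rw [hc.apply_eq_of_modEq hk1, hc'.apply_eq_of_modEq hk1]
    omega
  by_cases hk2 : k ≡ i + 1 [ZMOD n]
  · rw [hc.apply_eq_of_modEq hk2, hc'.apply_eq_of_modEq hk2, h0]
  simpa [lowerCode, hk1, hk2] using congrFun h k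

theorem sum_lowerCode (hn : 1 < n) (hc : Periodic c n) (hi : 0 < c i) :
    ∑ k ∈ Icc 1 (n : ℤ), lowerCode n i c k + 1 = ∑ k ∈ Icc 1 (n : ℤ), c k := by
  set a := windowRep n i
  set b := windowRep n (i + 1)
  have ha : a ≡ i [ZMOD n] := windowRep_modEq n i
  have hb : b ≡ i + 1 [ZMOD n] := windowRep_modEq n (i + 1)
  have hbi : ¬ b ≡ i [ZMOD n] := fun h => not_add_one_modEq hn i (hb.symm.trans h)
  have hab : a ≠ b := fun h => hbi (h ▸ ha)
  have hsub : {a, b} ⊆ Icc 1 (n : ℤ) := by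
    simp [insert_subset_iff, a, b, windowRep_mem (by omega : 0 < n)]
  have hoff : ∑ k ∈ Icc 1 (n : ℤ) \ {a, b}, lowerCode n i c k
      = ∑ k ∈ Icc 1 (n : ℤ) \ {a, b}, c k := by
    refine sum_congr rfl fun k hk => ?_
    obtain ⟨hk, hkab⟩ := mem_sdiff.mp hk
    simp only [mem_insert, mem_singleton, not_or] at hkab
    simp only [lowerCode, if_neg fun h => hkab.1 (eq_windowRep_of_modEq hk h),
      if_neg fun h => hkab.2 (eq_windowRep_of_modEq hk h)]
  rw [← sum_sdiff hsub, ← sum_sdiff hsub (f := c), sum_pair hab, sum_pair hab, hoff]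
  simp only [lowerCode, if_pos ha, if_neg hbi, if_pos hb, hc.apply_eq_of_modEq ha,
    hc.apply_eq_of_modEq hb]
  omega

end LowerCode

noncomputable def codeSum (n : ℕ) (π : Equiv.Perm ℤ) : ℕ := ∑ i ∈ Icc 1 (n : ℤ), codeEntry π i

theorem codeSum_one (n : ℕ) : codeSum n 1 = 0 := by
  simp [codeSum, codeEntry_one]

namespace IsAffine

variable {n : ℕ} {π : Equiv.Perm ℤ}

theorem codeEntry_mul_affS (hn : 0 < n) (hA : IsAffine n π) {i : ℤ} (hd : π (i + 1) < π i) :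
    codeEntry (π * affS n i) = lowerCode n i (codeEntry π) := by
  have hn1 := hA.one_lt hn hd
  have hAs := hA.mul hn (isAffine_affS hn i)
  funext k
  unfold lowerCode
  split_ifs with h1 h2
  · rw [hAs.periodic_codeEntry.apply_eq_of_modEq h1, codeEntry_mul_affS_self hn1 hd]
  · rw [hAs.periodic_codeEntry.apply_eq_of_modEq h2, ← hA.codeEntry_mul_affS_add_one hn hd,
      Nat.add_sub_cancel]
  · exact codeEntry_mul_affS_of_not_modEq hn1 π h1 h2

theorem codeSum_mul_affS (hn : 0 < n) (hA : IsAffine n π) {i : ℤ} (hd : π (i + 1) < π i) :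
    codeSum n (π * affS n i) + 1 = codeSum n π := by
  rw [codeSum, codeSum, hA.codeEntry_mul_affS hn hd]
  exact sum_lowerCode (hA.one_lt hn hd) hA.periodic_codeEntry
    (Nat.zero_lt_of_lt ((hA.codeEntry_lt_iff hn i).mpr hd))

theorem codeSum_mul_affS_le (hn : 0 < n) (hA : IsAffine n π) (i : ℤ) :
    codeSum n (π * affS n i) ≤ codeSum n π + 1 := by
  have hne : π (i + 1) ≠ π i := fun h => by simpa using π.injective h
  obtain hd | ha := hne.lt_or_gt
  · have := hA.codeSum_mul_affS hn hd
    omega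
  obtain rfl | hn1 : n = 1 ∨ 1 < n := by omega
  · rw [affS_one, mul_one]
    omega
  have hd : (π * affS n i) (i + 1) < (π * affS n i) i := by
    simpa only [Equiv.Perm.mul_apply, affS_apply_self hn1, affS_apply_add_one hn1] using ha
  have := (hA.mul hn (isAffine_affS hn i)).codeSum_mul_affS hn hd
  rw [mul_assoc, affS_mul_self, mul_one] at this
  omega

theorem exists_word (hn : 0 < n) (hA : IsAffine n π) :
    ∃ w : List ℤ, (∀ x ∈ w, 1 ≤ x ∧ x ≤ (n : ℤ)) ∧ (w.map (affS n)).prod = π ∧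
      w.length = codeSum n π := by
  induction hN : codeSum n π using Nat.strong_induction_on generalizing π with
  | _ N ih =>
  by_cases hπ : π = 1
  · subst hπ
    exact ⟨[], by simp, by simp, by simp [← hN, codeSum_one]⟩
  obtain ⟨i, hi, hd⟩ := hA.exists_descent hn hπ
  have hstep := hA.codeSum_mul_affS hn hd
  obtain ⟨w, hw, hprod, hlen⟩ :=
    ih _ (by omega) (hA.mul hn (isAffine_affS hn i)) rfl
  refine ⟨w ++ [i], ?_, ?_, ?_⟩
  · intro x hx
    rcases List.mem_append.mp hx with hx | hx
    · exact hw x hx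
    · exact (List.mem_singleton.mp hx) ▸ mem_Icc.mp hi
  · simp [hprod, mul_assoc, affS_mul_self]
  · simp only [List.length_append, List.length_singleton, hlen]
    omega

end IsAffine

theorem codeSum_prod_affS_le {n : ℕ} (hn : 0 < n) (w : List ℤ) :
    codeSum n (w.map (affS n)).prod ≤ w.length := by
  induction w using List.reverseRecOn with
  | nil => simp [codeSum_one]
  | append_singleton w x ih =>
    have := (isAffine_prod_affS hn w).codeSum_mul_affS_le hn x
    simp only [List.map_append, List.map_singleton, List.prod_append, List.prod_singleton,
      List.length_append, List.length_singleton]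
    omega

theorem IsAffine.wordLength_eq_codeSum {n : ℕ} {π : Equiv.Perm ℤ} (hn : 0 < n)
    (hA : IsAffine n π) : wordLength n π = codeSum n π := by
  obtain ⟨w, hw, hprod, hlen⟩ := hA.exists_word hn
  refine le_antisymm (Nat.sInf_le ⟨w, hw, hprod, hlen⟩) (le_csInf ⟨_, w, hw, hprod, hlen⟩ ?_)
  rintro _ ⟨w', -, rfl, rfl⟩
  exact codeSum_prod_affS_le hn w'

theorem IsAffine.eq_of_codeEntry_eq {n : ℕ} (hn : 0 < n) {π σ : Equiv.Perm ℤ}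
    (hπ : IsAffine n π) (hσ : IsAffine n σ) (h : codeEntry π = codeEntry σ) : π = σ := by
  induction hN : codeSum n π using Nat.strong_induction_on generalizing π σ with
  | _ N ih =>
  by_cases hπ1 : π = 1
  · subst hπ1
    by_contra hne
    obtain ⟨i, -, hd⟩ := hσ.exists_descent hn (Ne.symm hne)
    have := (hσ.codeEntry_lt_iff hn i).mpr hd
    simp [← h, codeEntry_one] at this
  obtain ⟨i, -, hd⟩ := hπ.exists_descent hn hπ1
  have hdσ : σ (i + 1) < σ i :=
    (hσ.codeEntry_lt_iff hn i).mp (h ▸ (hπ.codeEntry_lt_iff hn i).mpr hd)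
  have hstep := hπ.codeSum_mul_affS hn hd
  refine mul_right_cancel (b := affS n i) (ih _ (by omega) (hπ.mul hn (isAffine_affS hn i))
    (hσ.mul hn (isAffine_affS hn i)) ?_ rfl)
  rw [hπ.codeEntry_mul_affS hn hd, hσ.codeEntry_mul_affS hn hdσ, h]

theorem exists_codeEntry_eq {n : ℕ} (hn : 0 < n) {c : ℤ → ℕ} (hc : Periodic c n)
    (hz : ∃ i, c i = 0) : ∃ π, IsAffine n π ∧ codeEntry π = c := by
  induction hN : ∑ k ∈ Icc 1 (n : ℤ), c k using Nat.strong_induction_on generalizing c with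
  | _ N ih =>
  by_cases hc0 : c = 0
  · exact ⟨1, isAffine_one n, hc0 ▸ funext codeEntry_one⟩
  obtain ⟨i, hi, hi1⟩ := hc.exists_ne_zero_and_succ_eq_zero hn hc0 hz
  obtain rfl | hn1 : n = 1 ∨ 1 < n := by omega
  · exact absurd ((hc i).symm.trans (by simpa using hi1)) hi
  obtain ⟨σ, hσ, hσc⟩ := ih _ (by rw [← hN, ← sum_lowerCode hn1 hc (Nat.pos_of_ne_zero hi)]; omega)
    (c := lowerCode n i c) hc.lowerCode ⟨i, by simp [lowerCode, hi1]⟩ rfl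
  have hasc : σ i < σ (i + 1) := by
    refine lt_of_le_of_ne (not_lt.mp fun hd => ?_) fun h => by simpa using σ.injective h
    have := (hσ.codeEntry_lt_iff hn i).mpr hd
    simp [hσc, lowerCode, hi1] at this
  have hd : (σ * affS n i) (i + 1) < (σ * affS n i) i := by
    simpa only [Equiv.Perm.mul_apply, affS_apply_self hn1, affS_apply_add_one hn1] using hasc
  have hπ := hσ.mul hn (isAffine_affS hn i)
  refine ⟨σ * affS n i, hπ, eq_of_lowerCode_eq hn1 hπ.periodic_codeEntry hc
    (Nat.zero_lt_of_lt ((hπ.codeEntry_lt_iff hn i).mpr hd)) (Nat.pos_of_ne_zero hi) ?_⟩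
  rw [← hπ.codeEntry_mul_affS hn hd, mul_assoc, affS_mul_self, mul_one, hσc]

/-- the code is a bijection from `S̃_n` onto the set of `n`-tuples of
nonnegative integers with at least one zero entry, and the sum of the code entries
of `π` is `ℓ(π)`. -/
theorem code_bijection (n : ℕ) (hn : 0 < n) :
    (∀ π : Equiv.Perm ℤ, IsAffine n π →
      ∃ i : ℤ, 1 ≤ i ∧ i ≤ n ∧ codeEntry π i = 0) ∧
    (∀ π σ : Equiv.Perm ℤ, IsAffine n π → IsAffine n σ →
      (∀ i : ℤ, 1 ≤ i → i ≤ n → codeEntry π i = codeEntry σ i) → π = σ) ∧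
    (∀ v : ℤ → ℕ, (∃ i : ℤ, 1 ≤ i ∧ i ≤ n ∧ v i = 0) →
      ∃ π : Equiv.Perm ℤ, IsAffine n π ∧
        ∀ i : ℤ, 1 ≤ i → i ≤ n → codeEntry π i = v i) ∧
    (∀ π : Equiv.Perm ℤ, IsAffine n π →
      ∑ i ∈ Finset.Icc (1 : ℤ) (n : ℤ), codeEntry π i = wordLength n π) := by
  refine ⟨fun π hA => hA.exists_codeEntry_eq_zero hn, fun π σ hπ hσ h => ?_, fun v hv => ?_,
    fun π hA => (hA.wordLength_eq_codeSum hn).symm⟩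
  · exact hπ.eq_of_codeEntry_eq hn hσ
      (hπ.periodic_codeEntry.eq_of_eqOn_window hn hσ.periodic_codeEntry h)
  · obtain ⟨c, hc, hcv⟩ := exists_periodic_eqOn_window (n := n) v
    obtain ⟨i, hi1, hin, hvi⟩ := hv
    obtain ⟨π, hA, hπ⟩ := exists_codeEntry_eq hn hc ⟨i, (hcv i hi1 hin).trans hvi⟩
    exact ⟨π, hA, fun k hk1 hkn => hπ ▸ hcv k hk1 hkn⟩
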